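/- Let 0 < α < 1 and let (a_n)_{n≥1}, (b_n)_{n≥1} be sequences of nonnegative reals such that ∑_{n=1}^{∞} a_n² n^α < ∞ and ∑_{j=1}^{∞} j² 2^{(2-α)j} ∑_{n=2^j}^{2^{j+1}-1} b_n² < ∞. Then ∑_{n=2}^{∞} a_n b_n n ln n < ∞. -/

import Mathlib

open Real Finset

/-! Write `n = n^(α/2) · n^(1-α/2)`; by AM-GM, `a_n b_n n log n` is bounded by half of
`a_n² n^α + b_n² n^(2-α) log² n`. The first series converges by assumption. For the second, on the
dyadic block `2^j ≤ n < 2^(j+1)` one has `n^(2-α) ≤ 4 · 2^((2-α)j)` and `log n ≤ 2 j log 2`, so its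
block sums are dominated by `16 log² 2` times the terms of the second assumed series. -/

lemma sum_range_two_pow_eq_add_sum_Ico {M : Type*} [AddCommMonoid M] (f : ℕ → M) (N : ℕ) :
    ∑ n ∈ range (2 ^ N), f n = f 0 + ∑ j ∈ range N, ∑ n ∈ Ico (2 ^ j) (2 ^ (j + 1)), f n := by
  induction N with
  | zero => simp
  | succ N ih =>
    rw [sum_range_succ, ← add_assoc, ← ih, range_eq_Ico, range_eq_Ico,
      sum_Ico_consecutive f (Nat.zero_le _) (Nat.pow_le_pow_right two_pos N.le_succ)]

lemma summable_of_sum_Ico_two_pow_le {f g : ℕ → ℝ} (hf : ∀ n, 0 ≤ f n) (hg : Summable g)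
    (hfg : ∀ j, ∑ n ∈ Ico (2 ^ j) (2 ^ (j + 1)), f n ≤ g j) : Summable f := by
  have hg_nonneg j : 0 ≤ g j := (sum_nonneg fun n _ ↦ hf n).trans (hfg j)
  refine summable_of_sum_range_le hf (c := f 0 + ∑' j, g j) fun N ↦ ?_
  calc ∑ n ∈ range N, f n
      ≤ ∑ n ∈ range (2 ^ N), f n :=
        sum_le_sum_of_subset_of_nonneg (range_subset_range.2 Nat.lt_two_pow_self.le)
          fun n _ _ ↦ hf n
    _ = f 0 + ∑ j ∈ range N, ∑ n ∈ Ico (2 ^ j) (2 ^ (j + 1)), f n :=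
        sum_range_two_pow_eq_add_sum_Ico f N
    _ ≤ f 0 + ∑' j, g j := by
        gcongr
        exact (sum_le_sum fun j _ ↦ hfg j).trans (hg.sum_le_tsum _ fun j _ ↦ hg_nonneg j)

lemma log_le_two_mul_mul_log_two_of_mem_Ico {n j : ℕ} (hn : n ∈ Ico (2 ^ j) (2 ^ (j + 1))) :
    log n ≤ 2 * j * log 2 := by
  rw [mem_Ico] at hn
  rcases Nat.eq_zero_or_pos j with rfl | hj
  · obtain rfl : n = 1 := by omega
    simp
  have hn_pos : (0 : ℝ) < n := by exact_mod_cast (Nat.two_pow_pos j).trans_le hn.1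
  calc log n ≤ log (2 ^ (j + 1) : ℕ) := log_le_log hn_pos (by exact_mod_cast hn.2.le)
    _ = (j + 1) * log 2 := by push_cast; rw [log_pow]; push_cast; ring
    _ ≤ 2 * j * log 2 := by
        have : (1 : ℝ) ≤ j := by exact_mod_cast hj
        gcongr; linarith

lemma natCast_rpow_le_of_mem_Ico {p : ℝ} (hp : 0 ≤ p) {n j : ℕ}
    (hn : n ∈ Ico (2 ^ j) (2 ^ (j + 1))) :
    (n : ℝ) ^ p ≤ 2 ^ p * 2 ^ (p * j) := by
  rw [mem_Ico] at hn
  calc (n : ℝ) ^ p ≤ ((2 : ℝ) ^ (j + 1)) ^ p := by gcongr; exact_mod_cast hn.2.le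
    _ = 2 ^ p * 2 ^ (p * j) := by
        rw [← rpow_natCast, ← rpow_mul zero_le_two, ← rpow_add zero_lt_two]; push_cast; ring_nf

lemma rpow_mul_log_sq_le_of_mem_Ico {p : ℝ} (hp₀ : 0 ≤ p) (hp₂ : p ≤ 2) {n j : ℕ}
    (hn : n ∈ Ico (2 ^ j) (2 ^ (j + 1))) :
    (n : ℝ) ^ p * log n ^ 2 ≤ 16 * log 2 ^ 2 * (j ^ 2 * 2 ^ (p * j)) := by
  have hlog₀ : 0 ≤ log n := log_natCast_nonneg n
  have h2p : (2 : ℝ) ^ p ≤ 4 := by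
    calc (2 : ℝ) ^ p ≤ 2 ^ (2 : ℝ) := rpow_le_rpow_of_exponent_le one_le_two hp₂
      _ = 4 := by norm_num
  calc (n : ℝ) ^ p * log n ^ 2 ≤ (4 * 2 ^ (p * j)) * (2 * j * log 2) ^ 2 := by
        gcongr
        · exact (natCast_rpow_le_of_mem_Ico hp₀ hn).trans (by gcongr)
        · exact log_le_two_mul_mul_log_two_of_mem_Ico hn
    _ = 16 * log 2 ^ 2 * (j ^ 2 * 2 ^ (p * j)) := by ring

lemma abs_mul_mul_mul_le_half_add_rpow {x : ℝ} (hx : 0 ≤ x) (p a b c : ℝ) :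
    |a * b * x * c| ≤ (a ^ 2 * x ^ p + b ^ 2 * x ^ (2 - p) * c ^ 2) / 2 := by
  rcases hx.eq_or_lt with rfl | hx
  · simp only [mul_zero, zero_mul, abs_zero]
    positivity
  have hsplit : x = x ^ (p / 2) * x ^ ((2 - p) / 2) := by
    rw [← rpow_add hx, show p / 2 + (2 - p) / 2 = 1 by ring, rpow_one]
  have hsq (q : ℝ) : (x ^ (q / 2)) ^ 2 = x ^ q := by
    rw [← rpow_natCast, ← rpow_mul hx.le]; norm_num
  set u := a * x ^ (p / 2)
  set v := b * x ^ ((2 - p) / 2) * c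
  have huv : a * b * x * c = u * v := by rw [hsplit]; ring
  have hu : u ^ 2 = a ^ 2 * x ^ p := by rw [mul_pow, hsq]
  have hv : v ^ 2 = b ^ 2 * x ^ (2 - p) * c ^ 2 := by rw [mul_pow, mul_pow, hsq]
  have := two_mul_le_add_sq |u| |v|
  rw [sq_abs, sq_abs] at this
  rw [huv, abs_mul, ← hu, ← hv]
  linarith

theorem cauchy_schwarz_dyadic_estimate_general (α : ℝ) (hα : 0 < α ∧ α < 1)
    (a b : ℕ → ℝ)
    (hA : Summable (fun n : ℕ => (a n) ^ 2 * (n : ℝ) ^ α))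
    (hB : Summable (fun j : ℕ =>
      (j : ℝ) ^ 2 * 2 ^ ((2 - α) * j) * ∑ n ∈ Finset.Ico (2 ^ j) (2 ^ (j + 1)), (b n) ^ 2)) :
    Summable (fun n : ℕ => a n * b n * n * Real.log n) := by
  have hF : Summable fun n : ℕ ↦ b n ^ 2 * (n : ℝ) ^ (2 - α) * log n ^ 2 := by
    refine summable_of_sum_Ico_two_pow_le (fun n ↦ by positivity) (hB.mul_left (16 * log 2 ^ 2))
      fun j ↦ ?_
    rw [← mul_assoc, mul_sum]
    refine sum_le_sum fun n hn ↦ ?_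
    have := mul_le_mul_of_nonneg_left
      (rpow_mul_log_sq_le_of_mem_Ico (p := 2 - α) (by linarith) (by linarith) hn) (sq_nonneg (b n))
    linarith
  refine .of_norm_bounded ((hA.add hF).div_const 2) fun n ↦ ?_
  exact abs_mul_mul_mul_le_half_add_rpow n.cast_nonneg α _ _ _

theorem cauchy_schwarz_dyadic_estimate (α : ℝ) (hα : 0 < α ∧ α < 1)
    (a b : ℕ → ℝ) (ha : ∀ n, 0 ≤ a n) (hb : ∀ n, 0 ≤ b n)
    (hA : Summable (fun n : ℕ => (a n) ^ 2 * (n : ℝ) ^ α))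
    (hB : Summable (fun j : ℕ =>
      (j : ℝ) ^ 2 * 2 ^ ((2 - α) * j) * ∑ n ∈ Finset.Ico (2 ^ j) (2 ^ (j + 1)), (b n) ^ 2)) :
    Summable (fun n : ℕ => a n * b n * n * Real.log n) :=
  cauchy_schwarz_dyadic_estimate_general α hα a b hA hB
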